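/- Let G = (V, E, w) be a finite directed graph with positive integer vertex weights, let G' be its reduction graph, and let s ∈ V. Assume there exists a directed vertex cut (L, S, R) of G with s ∈ L. Then κ_G(s, ∗) = κ_{G'}(s_out) − w(V), where κ_G(s, ∗) is the minimum weight w(S) over all directed vertex cuts (L, S, R) of G with s ∈ L, and κ_{G'}(s_out) is the minimum weight w'(S') over all undirected vertex cuts (L', S', R') of G' with s_out ∈ L'. -/

import Mathlib

open scoped Classical

/-- `v_out`: the out-copy of a vertex `v`. -/
abbrev vOut {V : Type*} (v : V) : V ⊕ V := Sum.inl v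

/-- `v_in`: the in-copy of a vertex `v`. -/
abbrev vIn {V : Type*} (v : V) : V ⊕ V := Sum.inr v

/-- `V_out`: the set of out-copies of vertices. -/
def VOut (V : Type*) : Set (V ⊕ V) := Set.range Sum.inl

/-- `V_in`: the set of in-copies of vertices. -/
def VIn (V : Type*) : Set (V ⊕ V) := Set.range Sum.inr

/-- Adjacency relation of the reduction graph `G'` built from the directed edge set `E`:
a clique on `V_out`, a clique on `V_in`, the perfect matching `{v_out, v_in}`,
and an edge `{u_out, v_in}` for every directed edge `(u, v) ∈ E`. -/
def adj' {V : Type*} (E : Set (V × V)) : V ⊕ V → V ⊕ V → Prop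
  | Sum.inl u, Sum.inl v => u ≠ v
  | Sum.inr u, Sum.inr v => u ≠ v
  | Sum.inl u, Sum.inr v => u = v ∨ (u, v) ∈ E
  | Sum.inr u, Sum.inl v => v = u ∨ (v, u) ∈ E

/-- An undirected vertex cut `(L', S', R')` of the reduction graph `G'`:
pairwise disjoint sets covering all vertices, `L'` and `R'` nonempty, and no
edge of `G'` with one endpoint in `L'` and the other in `R'`. -/
structure IsUndirCut {V : Type*} (E : Set (V × V)) (L S R : Set (V ⊕ V)) : Prop where
  disjLS : Disjoint L S
  disjLR : Disjoint L R
  disjSR : Disjoint S R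
  cover : L ∪ S ∪ R = Set.univ
  neL : L.Nonempty
  neR : R.Nonempty
  sep : ∀ x ∈ L, ∀ y ∈ R, ¬ adj' E x y

/-- A directed vertex cut `(L, S, R)` of the directed graph `G = (V, E)`:
pairwise disjoint sets covering all vertices, `L` and `R` nonempty, and no
directed edge from `L` to `R`. -/
structure IsDirCut {V : Type*} (E : Set (V × V)) (L S R : Set V) : Prop where
  disjLS : Disjoint L S
  disjLR : Disjoint L R
  disjSR : Disjoint S R
  cover : L ∪ S ∪ R = Set.univ
  neL : L.Nonempty
  neR : R.Nonempty
  sep : ∀ u ∈ L, ∀ v ∈ R, (u, v) ∉ E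

/-- Weight `w(X)` of a set of vertices of `G`. -/
noncomputable def wt {V : Type*} [Fintype V] (w : V → ℕ) (X : Set V) : ℕ :=
  ∑ v ∈ X.toFinite.toFinset, w v

/-- Weight `w'(X)` of a set of vertices of `G'`, where `w'(v_out) = w'(v_in) = w(v)`. -/
noncomputable def wt' {V : Type*} [Fintype V] (w : V → ℕ) (X : Set (V ⊕ V)) : ℕ :=
  ∑ x ∈ X.toFinite.toFinset, Sum.elim w w x

/-- Neighborhood `N_{G'}(X)`: the vertices outside `X` adjacent in `G'` to some vertex of `X`. -/
def nbr' {V : Type*} (E : Set (V × V)) (X : Set (V ⊕ V)) : Set (V ⊕ V) :=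
  {y | y ∉ X ∧ ∃ x ∈ X, adj' E x y}

/-- In-neighborhood `N^in_G(R)` of a vertex set `R` in the directed graph `G`. -/
def NIn {V : Type*} (E : Set (V × V)) (R : Set V) : Set V :=
  {u | u ∉ R ∧ ∃ v ∈ R, (u, v) ∈ E}

lemma wt_eq {V : Type*} [Fintype V] (w : V → ℕ) (X : Set V) :
    wt w X = ∑ v : V, if v ∈ X then w v else 0 := by
  classical
  rw [wt, ← Finset.sum_filter]
  congr 1
  ext v; simp

lemma wt'_eq {V : Type*} [Fintype V] (w : V → ℕ) (X : Set (V ⊕ V)) :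
    wt' w X = ∑ x : V ⊕ V, if x ∈ X then Sum.elim w w x else 0 := by
  classical
  rw [wt', ← Finset.sum_filter]
  congr 1
  ext v; simp

lemma wt'_split {V : Type*} [Fintype V] (w : V → ℕ) (A B : Set V) :
    wt' w (Sum.inl '' A ∪ Sum.inr '' B) = wt w A + wt w B := by
  classical
  rw [wt'_eq, wt_eq, wt_eq, Fintype.sum_sum_type]
  congr 1 <;> apply Finset.sum_congr rfl <;> intro v _ <;> simp

lemma wt_union {V : Type*} [Fintype V] (w : V → ℕ) {A B : Set V} (h : Disjoint A B) :
    wt w (A ∪ B) = wt w A + wt w B := by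
  classical
  rw [wt_eq, wt_eq, wt_eq, ← Finset.sum_add_distrib]
  apply Finset.sum_congr rfl
  intro v _
  by_cases hA : v ∈ A
  · have hB : v ∉ B := fun hB => Set.disjoint_left.mp h hA hB
    simp [hA, hB]
  · by_cases hB : v ∈ B <;> simp [hA, hB]

lemma wt_total {V : Type*} [Fintype V] {E : Set (V × V)} (w : V → ℕ) {L S R : Set V}
    (h : IsDirCut E L S R) : wt w L + wt w S + wt w R = wt w Set.univ := by
  have h1 : Disjoint (L ∪ S) R := Set.disjoint_union_left.mpr ⟨h.disjLR, h.disjSR⟩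
  rw [← h.cover, wt_union w h1, wt_union w h.disjLS]

lemma aux_fwd {V : Type*} [Fintype V] {E : Set (V × V)} (w : V → ℕ) {L S R : Set V}
    (h : IsDirCut E L S R) {s : V} (hs : s ∈ L) :
    ∃ L' S' R' : Set (V ⊕ V), IsUndirCut E L' S' R' ∧ vOut s ∈ L' ∧
      wt' w S' = wt w S + wt w Set.univ := by
  have hmem : ∀ v : V, v ∈ L ∨ v ∈ S ∨ v ∈ R := by
    intro v
    have hc := h.cover
    rw [Set.eq_univ_iff_forall] at hc
    simpa [Set.mem_union, or_assoc] using hc v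
  refine ⟨Sum.inl '' L, Sum.inl '' (S ∪ R) ∪ Sum.inr '' (L ∪ S), Sum.inr '' R,
    ⟨?_, ?_, ?_, ?_, ⟨Sum.inl s, ⟨s, hs, rfl⟩⟩, h.neR.image _, ?_⟩, ⟨s, hs, rfl⟩, ?_⟩
  · rw [Set.disjoint_left]
    rintro x ⟨u, hu, rfl⟩ (⟨v, hv, hvv⟩ | ⟨v, hv, hvv⟩)
    · obtain rfl : v = u := Sum.inl.inj hvv
      rcases hv with hv | hv
      · exact Set.disjoint_left.mp h.disjLS hu hv
      · exact Set.disjoint_left.mp h.disjLR hu hv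
    · exact absurd hvv Sum.inr_ne_inl
  · rw [Set.disjoint_left]
    rintro x ⟨u, hu, rfl⟩ ⟨v, hv, hvv⟩
    exact absurd hvv Sum.inr_ne_inl
  · rw [Set.disjoint_left]
    rintro x (⟨v, hv, rfl⟩ | ⟨v, hv, rfl⟩) ⟨u, hu, huu⟩
    · exact absurd huu Sum.inr_ne_inl
    · obtain rfl : u = v := Sum.inr.inj huu
      rcases hv with hv | hv
      · exact Set.disjoint_left.mp h.disjLR hv hu
      · exact Set.disjoint_left.mp h.disjSR hv hu
  · ext x
    simp only [Set.mem_univ, iff_true, Set.mem_union]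
    cases x with
    | inl v =>
      rcases hmem v with hv | hv | hv
      · exact Or.inl (Or.inl ⟨v, hv, rfl⟩)
      · exact Or.inl (Or.inr (Or.inl ⟨v, Or.inl hv, rfl⟩))
      · exact Or.inl (Or.inr (Or.inl ⟨v, Or.inr hv, rfl⟩))
    | inr v =>
      rcases hmem v with hv | hv | hv
      · exact Or.inl (Or.inr (Or.inr ⟨v, Or.inl hv, rfl⟩))
      · exact Or.inl (Or.inr (Or.inr ⟨v, Or.inr hv, rfl⟩))
      · exact Or.inr ⟨v, hv, rfl⟩
  · rintro x ⟨u, hu, rfl⟩ y ⟨v, hv, rfl⟩ hadj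
    rcases hadj with rfl | hE'
    · exact Set.disjoint_left.mp h.disjLR hu hv
    · exact h.sep u hu v hv hE'
  · rw [wt'_split, wt_union w h.disjSR, wt_union w h.disjLS]
    have := wt_total w h
    omega

lemma aux_bwd {V : Type*} [Fintype V] {E : Set (V × V)} (w : V → ℕ)
    {L' S' R' : Set (V ⊕ V)} (h : IsUndirCut E L' S' R') {s : V} (hs : vOut s ∈ L') :
    ∃ L S R : Set V, IsDirCut E L S R ∧ s ∈ L ∧
      wt' w S' = wt w S + wt w Set.univ := by
  have hRout : ∀ u : V, Sum.inl u ∉ R' := by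
    intro u hu
    by_cases h' : s = u
    · subst h'
      exact Set.disjoint_left.mp h.disjLR hs hu
    · exact h.sep _ hs _ hu h'
  obtain ⟨r0, hr0⟩ := h.neR
  obtain ⟨v0, hv0⟩ : ∃ v0 : V, Sum.inr v0 ∈ R' := by
    cases r0 with
    | inl u => exact absurd hr0 (hRout u)
    | inr v => exact ⟨v, hr0⟩
  have hLin : ∀ u : V, Sum.inr u ∉ L' := by
    intro u hu
    by_cases h' : u = v0
    · subst h'
      exact Set.disjoint_left.mp h.disjLR hu hv0
    · exact h.sep _ hu _ hv0 h'
  set L : Set V := {v | Sum.inl v ∈ L'} with hL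
  set R : Set V := {v | Sum.inr v ∈ R'} with hR
  set S : Set V := (L ∪ R)ᶜ with hSdef
  have hS'mem : ∀ x, x ∈ S' ↔ x ∉ L' ∧ x ∉ R' := by
    intro x
    constructor
    · intro hx
      exact ⟨fun h' => Set.disjoint_left.mp h.disjLS h' hx,
        fun h' => Set.disjoint_left.mp h.disjSR hx h'⟩
    · rintro ⟨h1, h2⟩
      have hc := h.cover
      rw [Set.eq_univ_iff_forall] at hc
      rcases hc x with (hx | hx) | hx
      · exact absurd hx h1
      · exact hx
      · exact absurd hx h2
  have hS' : S' = Sum.inl '' Lᶜ ∪ Sum.inr '' Rᶜ := by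
    ext x
    cases x with
    | inl v =>
      simp only [hS'mem, Set.mem_union, Set.mem_image, Set.mem_compl_iff]
      constructor
      · rintro ⟨h1, _⟩
        exact Or.inl ⟨v, h1, rfl⟩
      · rintro (⟨u, hu, huu⟩ | ⟨u, hu, huu⟩)
        · obtain rfl : u = v := Sum.inl.inj huu
          exact ⟨hu, hRout u⟩
        · exact absurd huu Sum.inr_ne_inl
    | inr v =>
      simp only [hS'mem, Set.mem_union, Set.mem_image, Set.mem_compl_iff]
      constructor
      · rintro ⟨_, h2⟩
        exact Or.inr ⟨v, h2, rfl⟩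
      · rintro (⟨u, hu, huu⟩ | ⟨u, hu, huu⟩)
        · exact absurd huu Sum.inl_ne_inr
        · obtain rfl : u = v := Sum.inr.inj huu
          exact ⟨hLin u, hu⟩
  have hdLR : Disjoint L R := by
    rw [Set.disjoint_left]
    intro v hvL hvR
    exact h.sep _ hvL _ hvR (Or.inl rfl)
  refine ⟨L, S, R, ⟨disjoint_compl_right.mono_left Set.subset_union_left, hdLR,
    (disjoint_compl_right.mono_left Set.subset_union_right).symm, ?_, ⟨s, hs⟩, ⟨v0, hv0⟩,
    ?_⟩, hs, ?_⟩
  · ext v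
    simp only [Set.mem_univ, iff_true, Set.mem_union, hSdef, Set.mem_compl_iff]
    tauto
  · intro u hu v hv hE'
    exact h.sep _ hu _ hv (Or.inr hE')
  · rw [hS', wt'_split]
    have e1 : wt w L + wt w Lᶜ = wt w Set.univ := by
      rw [← wt_union w disjoint_compl_right, Set.union_compl_self]
    have e2 : wt w R + wt w Rᶜ = wt w Set.univ := by
      rw [← wt_union w disjoint_compl_right, Set.union_compl_self]
    have e3 : wt w L + wt w R + wt w S = wt w Set.univ := by
      rw [← wt_union w hdLR, ← wt_union w disjoint_compl_right, Set.union_compl_self]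
    omega

/-- single-source case of Corollary
`corollary:single-source-min-cut-G'-G`: if `G` has a directed vertex cut with
`s ∈ L`, then `κ_G(s, ∗) = κ_{G'}(s_out) - w(V)`. -/
theorem single_source_min_cut_reduction {V : Type*} [Fintype V] (E : Set (V × V))
    (hE : ∀ v : V, (v, v) ∉ E) (w : V → ℕ) (hw : ∀ v : V, 1 ≤ w v) (s : V)
    (hex : ∃ L S R : Set V, IsDirCut E L S R ∧ s ∈ L) :
    sInf {k : ℕ | ∃ L S R : Set V, IsDirCut E L S R ∧ s ∈ L ∧ k = wt w S} =
      sInf {k : ℕ | ∃ L' S' R' : Set (V ⊕ V), IsUndirCut E L' S' R' ∧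
          vOut s ∈ L' ∧ k = wt' w S'} - wt w Set.univ := by
  classical
  set A : Set ℕ := {k : ℕ | ∃ L S R : Set V, IsDirCut E L S R ∧ s ∈ L ∧ k = wt w S} with hA
  set B : Set ℕ := {k : ℕ | ∃ L' S' R' : Set (V ⊕ V), IsUndirCut E L' S' R' ∧
      vOut s ∈ L' ∧ k = wt' w S'} with hB
  obtain ⟨L0, S0, R0, h0, hs0⟩ := hex
  have hAne : A.Nonempty := ⟨wt w S0, L0, S0, R0, h0, hs0, rfl⟩
  obtain ⟨L1, S1, R1, h1, hs1, hk1⟩ := Nat.sInf_mem hAne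
  obtain ⟨L', S', R', h', hs', hk'⟩ := aux_fwd w h1 hs1
  have hBle : sInf B ≤ sInf A + wt w Set.univ := by
    apply Nat.sInf_le
    exact ⟨L', S', R', h', hs', by omega⟩
  have hBne : B.Nonempty := ⟨wt' w S', L', S', R', h', hs', rfl⟩
  obtain ⟨L2, S2, R2, h2, hs2, hk2⟩ := Nat.sInf_mem hBne
  obtain ⟨L3, S3, R3, h3, hs3, hk3⟩ := aux_bwd w h2 hs2
  have hAle : sInf A ≤ wt w S3 := Nat.sInf_le ⟨L3, S3, R3, h3, hs3, rfl⟩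
  omega
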